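/- arXiv:0912.1654 — 4 statements merged into one kernel-verified Lean document; each statement's English description precedes it below -/
import Mathlib

section
/- An element x = x₀ + x₁e₁ + x₂e₂ of A is invertible if and only if x₀² - x₁² ≠ 0. -/
def Amul (x y : ℝ × ℝ × ℝ) : ℝ × ℝ × ℝ :=
  (x.1 * y.1 + x.2.1 * y.2.1,
   x.1 * y.2.1 + x.2.1 * y.1,
   x.1 * y.2.2 + x.2.1 * y.2.2 + x.2.2 * y.1 - x.2.2 * y.2.1)

def Aone : ℝ × ℝ × ℝ := (1, 0, 0)

/-- `x = x₀ + x₁e₁ + x₂e₂` is invertible in `A` iff `x₀² - x₁² ≠ 0`. -/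
theorem stmt_4 : ∀ x : ℝ × ℝ × ℝ,
    (∃ y : ℝ × ℝ × ℝ, Amul x y = Aone ∧ Amul y x = Aone) ↔
      x.1 ^ 2 - x.2.1 ^ 2 ≠ 0 := by
  intro x
  obtain ⟨a, b, c⟩ := x
  constructor
  · rintro ⟨⟨p, q, r⟩, h1, h2⟩
    simp only [Amul, Aone, Prod.mk.injEq] at h1 h2
    obtain ⟨e1, e2, -⟩ := h1
    intro hd
    simp only at hd
    have ha : a = 0 := by linear_combination p * hd - a * e1 + b * e2
    have hb : b = 0 := by linear_combination -q * hd - b * e1 + a * e2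
    rw [ha, hb] at e1; simp at e1
  · intro hd
    refine ⟨(a / (a^2 - b^2), -b / (a^2 - b^2), -c / (a^2 - b^2)), ?_, ?_⟩ <;>
      simp only [Amul, Aone, Prod.mk.injEq] <;>
      refine ⟨?_, ?_, ?_⟩ <;> field_simp <;> ring
end

section
/- The set H₂ = {x₀ + x₂e₂ : x₀ ≠ 0} is a normal subgroup of the group G of invertible elements of A. -/
def Ginv : Set (ℝ × ℝ × ℝ) :=
  {x | ∃ y : ℝ × ℝ × ℝ, Amul x y = Aone ∧ Amul y x = Aone}

/-- `H₂ = {x₀ + x₂e₂ : x₀ ≠ 0}`. -/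
def H₂ : Set (ℝ × ℝ × ℝ) := {x | x.2.1 = 0 ∧ x.1 ≠ 0}

/-! The first two coordinates of a product only see the first two coordinates of the factors:
they are the product in the commutative algebra `A / ℝe₂ ≅ ℝ[e₁]`. `H₂` is the preimage of
the nonzero scalars under this quotient map, so conjugating `h ∈ H₂` by `g` multiplies the
image of `g g⁻¹ = 1` by the scalar `h₀`, which lands back in `H₂`. -/

section

variable {x : ℝ × ℝ × ℝ} (hx : x.2.1 = 0) (y : ℝ × ℝ × ℝ)
include hx

theorem Amul_fst_of_snd_fst_eq_zero : (Amul x y).1 = x.1 * y.1 := by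
  simp only [Amul, hx]; ring

theorem Amul_snd_fst_of_snd_fst_eq_zero : (Amul x y).2.1 = x.1 * y.2.1 := by
  simp only [Amul, hx]; ring

theorem Amul_Amul_fst_of_snd_fst_eq_zero (g : ℝ × ℝ × ℝ) :
    (Amul (Amul g x) y).1 = x.1 * (Amul g y).1 := by
  simp only [Amul, hx]; ring

theorem Amul_Amul_snd_fst_of_snd_fst_eq_zero (g : ℝ × ℝ × ℝ) :
    (Amul (Amul g x) y).2.1 = x.1 * (Amul g y).2.1 := by
  simp only [Amul, hx]; ring

end

/-- `(x₀ + x₂e₂)⁻¹ = x₀⁻¹ - x₂x₀⁻²e₂`. -/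
noncomputable def H₂inv (x : ℝ × ℝ × ℝ) : ℝ × ℝ × ℝ := (x.1⁻¹, 0, -x.2.2 / x.1 ^ 2)

theorem Amul_H₂inv {x : ℝ × ℝ × ℝ} (hx : x ∈ H₂) : Amul x (H₂inv x) = Aone := by
  obtain ⟨hx₁, hx₀⟩ := hx
  simp only [Amul, Aone, H₂inv, hx₁, Prod.mk.injEq]
  refine ⟨by field_simp; ring, by ring, by field_simp; ring⟩

theorem H₂inv_Amul {x : ℝ × ℝ × ℝ} (hx : x ∈ H₂) : Amul (H₂inv x) x = Aone := by
  obtain ⟨hx₁, hx₀⟩ := hx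
  simp only [Amul, Aone, H₂inv, hx₁, Prod.mk.injEq]
  refine ⟨by field_simp; ring, by ring, by field_simp; ring⟩

theorem H₂_subset_Ginv : H₂ ⊆ Ginv :=
  fun _ hx => ⟨H₂inv _, Amul_H₂inv hx, H₂inv_Amul hx⟩

theorem Aone_mem_H₂ : Aone ∈ H₂ := ⟨rfl, one_ne_zero⟩

theorem Amul_mem_H₂ {x y : ℝ × ℝ × ℝ} (hx : x ∈ H₂) (hy : y ∈ H₂) : Amul x y ∈ H₂ := by
  refine ⟨?_, ?_⟩
  · rw [Amul_snd_fst_of_snd_fst_eq_zero hx.1, hy.1, mul_zero]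
  · rw [Amul_fst_of_snd_fst_eq_zero hx.1]
    exact mul_ne_zero hx.2 hy.2

theorem mem_H₂_of_Amul_eq_Aone {x y : ℝ × ℝ × ℝ} (hx : x ∈ H₂) (hxy : Amul x y = Aone) :
    y ∈ H₂ := by
  have h₀ : x.1 * y.1 = 1 := by rw [← Amul_fst_of_snd_fst_eq_zero hx.1, hxy]; rfl
  have h₁ : x.1 * y.2.1 = 0 := by rw [← Amul_snd_fst_of_snd_fst_eq_zero hx.1, hxy]; rfl
  exact ⟨(mul_eq_zero.mp h₁).resolve_left hx.2, right_ne_zero_of_mul_eq_one h₀⟩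

theorem Amul_Amul_mem_H₂ {g g' h : ℝ × ℝ × ℝ} (hg : Amul g g' = Aone) (hh : h ∈ H₂) :
    Amul (Amul g h) g' ∈ H₂ := by
  refine ⟨?_, ?_⟩
  · rw [Amul_Amul_snd_fst_of_snd_fst_eq_zero hh.1, hg]
    exact mul_zero _
  · rw [Amul_Amul_fst_of_snd_fst_eq_zero hh.1, hg, Aone, mul_one]
    exact hh.2

/-- `H₂` is a normal subgroup of the group `G` of invertible elements of `A`. -/
theorem stmt_7 :
    H₂ ⊆ Ginv ∧
    Aone ∈ H₂ ∧
    (∀ x ∈ H₂, ∀ y ∈ H₂, Amul x y ∈ H₂) ∧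
    (∀ x ∈ H₂, ∀ y : ℝ × ℝ × ℝ, Amul x y = Aone ∧ Amul y x = Aone → y ∈ H₂) ∧
    (∀ g ∈ Ginv, ∀ g' : ℝ × ℝ × ℝ, Amul g g' = Aone ∧ Amul g' g = Aone →
      ∀ h ∈ H₂, Amul (Amul g h) g' ∈ H₂) :=
  ⟨H₂_subset_Ginv, Aone_mem_H₂, fun _ hx _ hy => Amul_mem_H₂ hx hy,
    fun _ hx _ hxy => mem_H₂_of_Amul_eq_Aone hx hxy.1,
    fun _ _ _ hgg' _ hh => Amul_Amul_mem_H₂ hgg'.1 hh⟩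
end

section
/- If a = cosh φ + sinh φ · e₁ + u sinh φ · e₂ (so (a,a) = 1) and x ∈ A with (x,x) > 0, then (x, ax)/((x,x)) = cosh φ; in particular the 'angle' between x and ax is independent of x. -/
/-- The bilinear form `(x,y) = x₀y₀ - x₁y₁`. -/
def Abil (x y : ℝ × ℝ × ℝ) : ℝ := x.1 * y.1 - x.2.1 * y.2.1

/-- For a rotation `a = cosh φ + sinh φ e₁ + u sinh φ e₂` and any `x` with
`(x,x) > 0`, the hyperbolic cosine of the angle between `x` and `ax` is
`cosh φ`, independently of `x`. -/
theorem stmt_12 : ∀ (φ u : ℝ) (x : ℝ × ℝ × ℝ),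
    0 < Abil x x →
    Abil x (Amul (Real.cosh φ, Real.sinh φ, u * Real.sinh φ) x) / Abil x x =
      Real.cosh φ := by
  intro φ u x h
  have : Abil x (Amul (Real.cosh φ, Real.sinh φ, u * Real.sinh φ) x)
      = Real.cosh φ * Abil x x := by
    simp only [Abil, Amul]
    ring
  rw [this, mul_div_assoc, div_self h.ne', mul_one]
end

section
/- For the connection on the plane with nonzero Christoffel symbols Γ¹₁₁ = Γ²₁₂ = Γ²₂₁ = -2x₁/(1+x₁²) and Γ²₁₁ = 2x₂/(1+x₁²), every curve of the form x₂ = A(x₁² - 1) + B x₁ (parametrized by x₁ = tan(ωt + φ₀), x₂ accordingly) is a geodesic; specifically, the curves t ↦ (tan(ωt+φ₀), (c₁e^{2iωt}+c₂e^{-2iωt})sec²(ωt+φ₀)) satisfy the geodesic equations ẍᵏ + Γᵏᵢⱼ ẋⁱ ẋʲ = 0. -/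
/-!
Along `x₁ = tan θ` with `θ = ωt + φ₀` one has the Riccati equation `ẋ₁ = ω(1 + x₁²)`,
hence `ẍ₁ = 2ω x₁ ẋ₁`; this is exactly the first geodesic equation (it says that `arctan x₁`
is affine in `t`). For `x₂ = q(x₁)` the second equation then reduces to `ẋ₁²/(1 + x₁²)` times
`(1 + y²) q'' - 2y q' + 2q` at `y = x₁`, an ODE whose solutions are the parabolas
`q(y) = A(y² - 1) + By`.
-/

open Real Filter Topology

def GeodesicEquationsAt (x₁ x₂ : ℝ → ℝ) (t : ℝ) : Prop :=
  deriv (deriv x₁) t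
      + (-2 * x₁ t / (1 + x₁ t ^ 2)) * (deriv x₁ t) ^ 2 = 0 ∧
    deriv (deriv x₂) t
      + (2 * x₂ t / (1 + x₁ t ^ 2)) * (deriv x₁ t) ^ 2
      + 2 * (-2 * x₁ t / (1 + x₁ t ^ 2)) * (deriv x₁ t) * (deriv x₂ t) = 0

theorem deriv_deriv_eq_of_eventually_hasDerivAt {f f' : ℝ → ℝ} {f'' t : ℝ}
    (hf : ∀ᶠ s in 𝓝 t, HasDerivAt f (f' s) s) (hf' : HasDerivAt f' f'' t) :
    deriv (deriv f) t = f'' := by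
  have hderiv : deriv f =ᶠ[𝓝 t] f' := hf.mono fun s hs => hs.deriv
  rw [hderiv.deriv_eq]
  exact hf'.deriv

theorem hasDerivAt_tan_mul_add {ω φ₀ s : ℝ} (h : cos (ω * s + φ₀) ≠ 0) :
    HasDerivAt (fun s => tan (ω * s + φ₀)) (ω * (1 + tan (ω * s + φ₀) ^ 2)) s := by
  have hlin : HasDerivAt (fun s : ℝ => ω * s + φ₀) ω s := by
    simpa using ((hasDerivAt_id s).const_mul ω).add_const φ₀
  refine ((hasDerivAt_tan h).comp s hlin).congr_deriv ?_
  rw [tan_eq_sin_div_cos, div_pow, one_add_div (pow_ne_zero 2 h), cos_sq_add_sin_sq]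
  ring

theorem eventually_hasDerivAt_tan_mul_add {ω φ₀ t : ℝ} (ht : cos (ω * t + φ₀) ≠ 0) :
    ∀ᶠ s in 𝓝 t,
      HasDerivAt (fun s => tan (ω * s + φ₀)) (ω * (1 + tan (ω * s + φ₀) ^ 2)) s := by
  have hcos : Continuous fun s => cos (ω * s + φ₀) := by fun_prop
  exact (hcos.continuousAt.eventually_ne ht).mono fun s hs => hasDerivAt_tan_mul_add hs

namespace Riccati

variable {x : ℝ → ℝ} {ω t : ℝ}

theorem deriv_eq (hx : ∀ᶠ s in 𝓝 t, HasDerivAt x (ω * (1 + x s ^ 2)) s) :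
    deriv x t = ω * (1 + x t ^ 2) :=
  hx.self_of_nhds.deriv

theorem hasDerivAt_velocity (hx : ∀ᶠ s in 𝓝 t, HasDerivAt x (ω * (1 + x s ^ 2)) s) :
    HasDerivAt (fun s => ω * (1 + x s ^ 2)) (2 * ω ^ 2 * x t * (1 + x t ^ 2)) t := by
  refine (((hx.self_of_nhds.pow 2).const_add 1).const_mul ω).congr_deriv ?_
  ring

theorem deriv_deriv_eq (hx : ∀ᶠ s in 𝓝 t, HasDerivAt x (ω * (1 + x s ^ 2)) s) :
    deriv (deriv x) t = 2 * ω ^ 2 * x t * (1 + x t ^ 2) :=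
  deriv_deriv_eq_of_eventually_hasDerivAt hx (hasDerivAt_velocity hx)

theorem eventually_hasDerivAt_parabola (hx : ∀ᶠ s in 𝓝 t, HasDerivAt x (ω * (1 + x s ^ 2)) s)
    (A B : ℝ) :
    ∀ᶠ s in 𝓝 t, HasDerivAt (fun s => A * (x s ^ 2 - 1) + B * x s)
      ((2 * A * x s + B) * (ω * (1 + x s ^ 2))) s := by
  refine hx.mono fun s hs => ?_
  refine ((((hs.pow 2).sub_const 1).const_mul A).add (hs.const_mul B)).congr_deriv ?_
  ring

theorem deriv_parabola (hx : ∀ᶠ s in 𝓝 t, HasDerivAt x (ω * (1 + x s ^ 2)) s)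
    (A B : ℝ) :
    deriv (fun s => A * (x s ^ 2 - 1) + B * x s) t
      = (2 * A * x t + B) * (ω * (1 + x t ^ 2)) :=
  (eventually_hasDerivAt_parabola hx A B).self_of_nhds.deriv

theorem deriv_deriv_parabola (hx : ∀ᶠ s in 𝓝 t, HasDerivAt x (ω * (1 + x s ^ 2)) s)
    (A B : ℝ) :
    deriv (deriv fun s => A * (x s ^ 2 - 1) + B * x s) t
      = 2 * A * (ω * (1 + x t ^ 2)) ^ 2
        + (2 * A * x t + B) * (2 * ω ^ 2 * x t * (1 + x t ^ 2)) := by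
  refine deriv_deriv_eq_of_eventually_hasDerivAt (eventually_hasDerivAt_parabola hx A B) ?_
  have hlin : HasDerivAt (fun s => 2 * A * x s + B) (2 * A * (ω * (1 + x t ^ 2))) t :=
    (hx.self_of_nhds.const_mul (2 * A)).add_const B
  refine (hlin.mul (hasDerivAt_velocity hx)).congr_deriv ?_
  ring

theorem geodesicEquationsAt_parabola (hx : ∀ᶠ s in 𝓝 t, HasDerivAt x (ω * (1 + x s ^ 2)) s)
    (A B : ℝ) :
    GeodesicEquationsAt x (fun s => A * (x s ^ 2 - 1) + B * x s) t := by
  have hpos : 1 + x t ^ 2 ≠ 0 := by positivity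
  constructor
  · rw [deriv_deriv_eq hx, deriv_eq hx]
    field_simp
    ring
  · rw [deriv_deriv_parabola hx, deriv_parabola hx, deriv_eq hx]
    field_simp
    ring

end Riccati

/-- For the connection with nonzero Christoffel symbols
`Γ¹₁₁ = Γ²₁₂ = Γ²₂₁ = -2x₁/(1+x₁²)` and `Γ²₁₁ = 2x₂/(1+x₁²)`, the curves
`x₁(t) = tan(ωt+φ₀)`, `x₂(t) = A(x₁(t)² - 1) + B x₁(t)` (the parabolas
`x₂ = A(x₁² - 1) + Bx₁`) satisfy the geodesic equations
`ẍᵏ + Γᵏᵢⱼ ẋⁱ ẋʲ = 0`. -/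
theorem stmt_19 : ∀ A B ω φ₀ t : ℝ, Real.cos (ω * t + φ₀) ≠ 0 →
    (fun x₁ x₂ : ℝ → ℝ =>
      deriv (deriv x₁) t
        + (-2 * x₁ t / (1 + x₁ t ^ 2)) * (deriv x₁ t) ^ 2 = 0 ∧
      deriv (deriv x₂) t
        + (2 * x₂ t / (1 + x₁ t ^ 2)) * (deriv x₁ t) ^ 2
        + 2 * (-2 * x₁ t / (1 + x₁ t ^ 2)) * (deriv x₁ t) * (deriv x₂ t) = 0)
    (fun s => Real.tan (ω * s + φ₀))
    (fun s => A * (Real.tan (ω * s + φ₀) ^ 2 - 1) + B * Real.tan (ω * s + φ₀)) := by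
  intro A B ω φ₀ t ht
  exact Riccati.geodesicEquationsAt_parabola (eventually_hasDerivAt_tan_mul_add ht) A B
end
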